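/- arXiv:2407.07364 — 2 statements merged into one kernel-verified Lean document; each statement's English description precedes it below -/
import Mathlib

section
/- (Policy improvement.) Let π_old and π_new be full-support policies with auxiliary Q-functions Q^{π_old} and Q^{π_new}. If for every state s the improvement objective satisfies J_{Q^{π_old}}(π_new, s) ≤ J_{Q^{π_old}}(π_old, s), then Q^{π_new}(s,a) ≥ Q^{π_old}(s,a) for all (s,a) ∈ S × A. -/
open scoped BigOperators

variable {S A : Type*}

/-- A policy has full support if it assigns positive probability to every action
in every state. -/
def FullSupport (π : S → PMF A) : Prop :=
  ∀ s a, 0 < ((π s) a).toReal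

/-- The augmented Bellman operator of TransRL:
`(T_π Q)(s,a) = r s a + γ · Σ_{s'} p(s'|s,a) · Σ_{a'} π(a'|s') ·
  (Q(s',a') + α · log(π_TC(a'|s') / π(a'|s')))`,
where terms with `π(a'|s') = 0` contribute `0`. -/
noncomputable def augBellman [Fintype S] [Fintype A]
    (p : S → A → PMF S) (r : S → A → ℝ) (γ α : ℝ) (πTC : S → PMF A)
    (π : S → PMF A) (Q : S → A → ℝ) : S → A → ℝ :=
  fun s a => r s a + γ * ∑ s' : S, ((p s a) s').toReal *
    ∑ a' : A, ((π s') a').toReal *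
      (Q s' a' + α * Real.log (((πTC s') a').toReal / ((π s') a').toReal))

/-- The per-state policy improvement objective
`J_Q(π, s) = Σ_a π(a|s) · (log π(a|s) − log π_TC(a|s) − Q(s,a)/α)`,
with terms where `π(a|s) = 0` contributing `0`. -/
noncomputable def impObj [Fintype A] (πTC : S → PMF A) (α : ℝ)
    (Q : S → A → ℝ) (π : S → PMF A) (s : S) : ℝ :=
  ∑ a : A, ((π s) a).toReal *
    (Real.log ((π s) a).toReal - Real.log (((πTC s) a).toReal) - Q s a / α)

/-- The auxiliary state value
`V(s) = Σ_a π(a|s) · (Q(s,a) + α · log(π_TC(a|s)/π(a|s)))`. -/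
noncomputable def auxValue [Fintype A] (πTC : S → PMF A) (α : ℝ)
    (Q : S → A → ℝ) (π : S → PMF A) (s : S) : ℝ :=
  ∑ a : A, ((π s) a).toReal *
    (Q s a + α * Real.log (((πTC s) a).toReal / ((π s) a).toReal))

/-- The soft (SAC) Bellman operator:
`(T^H_π Q)(s,a) = r s a + γ · Σ_{s'} p(s'|s,a) · Σ_{a'} π(a'|s') ·
  (Q(s',a') − α · log π(a'|s'))`. -/
noncomputable def softBellman [Fintype S] [Fintype A]
    (p : S → A → PMF S) (r : S → A → ℝ) (γ α : ℝ)
    (π : S → PMF A) (Q : S → A → ℝ) : S → A → ℝ :=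
  fun s a => r s a + γ * ∑ s' : S, ((p s a) s').toReal *
    ∑ a' : A, ((π s') a').toReal * (Q s' a' - α * Real.log (((π s') a').toReal))

lemma pmf_sum_toReal {β : Type*} [Fintype β] (q : PMF β) :
    ∑ b : β, (q b).toReal = 1 := by
  have h := q.tsum_coe
  rw [tsum_fintype] at h
  rw [← ENNReal.toReal_sum (fun b _ => q.apply_ne_top b), h, ENNReal.toReal_one]

lemma auxValue_eq_neg_alpha_impObj [Fintype A] (πTC π : S → PMF A) (α : ℝ)
    (hα : 0 < α) (hTC : FullSupport πTC) (hπ : FullSupport π)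
    (Q : S → A → ℝ) (s : S) :
    auxValue πTC α Q π s = -α * impObj πTC α Q π s := by
  unfold auxValue impObj
  rw [Finset.mul_sum]
  refine Finset.sum_congr rfl fun a _ => ?_
  rw [Real.log_div (ne_of_gt (hTC s a)) (ne_of_gt (hπ s a))]
  field_simp
  ring

theorem policy_improvement [Fintype S] [Fintype A] [Nonempty S] [Nonempty A]
    (p : S → A → PMF S) (r : S → A → ℝ) (γ α : ℝ)
    (hγ0 : 0 ≤ γ) (hγ1 : γ < 1) (hα : 0 < α)
    (πTC : S → PMF A) (hTC : FullSupport πTC)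
    (πold πnew : S → PMF A) (hold : FullSupport πold) (hnew : FullSupport πnew)
    (Qold : S → A → ℝ) (hfixOld : augBellman p r γ α πTC πold Qold = Qold)
    (Qnew : S → A → ℝ) (hfixNew : augBellman p r γ α πTC πnew Qnew = Qnew)
    (hJ : ∀ s, impObj πTC α Qold πnew s ≤ impObj πTC α Qold πold s) :
    ∀ s a, Qold s a ≤ Qnew s a := by
  have hV : ∀ s, auxValue πTC α Qold πold s ≤ auxValue πTC α Qold πnew s := by
    intro s
    rw [auxValue_eq_neg_alpha_impObj πTC πold α hα hTC hold,
        auxValue_eq_neg_alpha_impObj πTC πnew α hα hTC hnew]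
    nlinarith [hJ s]
  have hstep : ∀ s a, Qold s a ≤ augBellman p r γ α πTC πnew Qold s a := by
    intro s a
    conv_lhs => rw [← hfixOld]
    show r s a + γ * ∑ s' : S, ((p s a) s').toReal * auxValue πTC α Qold πold s'
        ≤ r s a + γ * ∑ s' : S, ((p s a) s').toReal * auxValue πTC α Qold πnew s'
    gcongr with s' _
    exact hV s'
  obtain ⟨x, -, hx⟩ := Finset.exists_max_image (Finset.univ : Finset (S × A))
      (fun x => Qold x.1 x.2 - Qnew x.1 x.2) Finset.univ_nonempty
  set M := Qold x.1 x.2 - Qnew x.1 x.2 with hMdef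
  have hub : ∀ s a, Qold s a - Qnew s a ≤ M := fun s a =>
    hx (s, a) (Finset.mem_univ _)
  have hdiff : ∀ s a,
      augBellman p r γ α πTC πnew Qold s a - augBellman p r γ α πTC πnew Qnew s a
        ≤ γ * M := by
    intro s a
    have key : augBellman p r γ α πTC πnew Qold s a
        - augBellman p r γ α πTC πnew Qnew s a
        = γ * ∑ s' : S, ((p s a) s').toReal *
            ∑ a' : A, ((πnew s') a').toReal * (Qold s' a' - Qnew s' a') := by
      unfold augBellman
      have h0 : (r s a + γ * ∑ s' : S, ((p s a) s').toReal *
            ∑ a' : A, ((πnew s') a').toReal *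
              (Qold s' a' + α * Real.log (((πTC s') a').toReal / ((πnew s') a').toReal)))
          - (r s a + γ * ∑ s' : S, ((p s a) s').toReal *
            ∑ a' : A, ((πnew s') a').toReal *
              (Qnew s' a' + α * Real.log (((πTC s') a').toReal / ((πnew s') a').toReal)))
          = γ * ((∑ s' : S, ((p s a) s').toReal *
            ∑ a' : A, ((πnew s') a').toReal *
              (Qold s' a' + α * Real.log (((πTC s') a').toReal / ((πnew s') a').toReal)))
          - ∑ s' : S, ((p s a) s').toReal *
            ∑ a' : A, ((πnew s') a').toReal *
              (Qnew s' a' + α * Real.log (((πTC s') a').toReal / ((πnew s') a').toReal))) := by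
        ring
      rw [h0, ← Finset.sum_sub_distrib]
      congr 1
      refine Finset.sum_congr rfl fun s' _ => ?_
      rw [← mul_sub, ← Finset.sum_sub_distrib]
      congr 1
      refine Finset.sum_congr rfl fun a' _ => ?_
      ring
    rw [key]
    have hinner : ∀ s' : S,
        ∑ a' : A, ((πnew s') a').toReal * (Qold s' a' - Qnew s' a') ≤ M := by
      intro s'
      calc ∑ a' : A, ((πnew s') a').toReal * (Qold s' a' - Qnew s' a')
          ≤ ∑ a' : A, ((πnew s') a').toReal * M := by
            refine Finset.sum_le_sum fun a' _ => ?_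
            exact mul_le_mul_of_nonneg_left (hub s' a') ENNReal.toReal_nonneg
        _ = M := by rw [← Finset.sum_mul, pmf_sum_toReal, one_mul]
    calc γ * ∑ s' : S, ((p s a) s').toReal *
            ∑ a' : A, ((πnew s') a').toReal * (Qold s' a' - Qnew s' a')
        ≤ γ * ∑ s' : S, ((p s a) s').toReal * M := by
          refine mul_le_mul_of_nonneg_left (Finset.sum_le_sum fun s' _ => ?_) hγ0
          exact mul_le_mul_of_nonneg_left (hinner s') ENNReal.toReal_nonneg
      _ = γ * M := by rw [← Finset.sum_mul, pmf_sum_toReal, one_mul]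
  have hMγ : M ≤ γ * M := by
    calc M = Qold x.1 x.2 - Qnew x.1 x.2 := hMdef
      _ ≤ augBellman p r γ α πTC πnew Qold x.1 x.2
            - augBellman p r γ α πTC πnew Qnew x.1 x.2 := by
          have h1 := hstep x.1 x.2
          have h2 : augBellman p r γ α πTC πnew Qnew x.1 x.2 = Qnew x.1 x.2 := by
            rw [hfixNew]
          linarith
      _ ≤ γ * M := hdiff x.1 x.2
  have hM0 : M ≤ 0 := by nlinarith
  intro s a
  linarith [hub s a]
end

section
/- (Policy iteration convergence of values.) Let (π_k)_{k∈ℕ} be a sequence of full-support policies such that for every k and every state s the improvement objective satisfies J_{Q^{π_k}}(π_{k+1}, s) ≤ J_{Q^{π_k}}(π_k, s). Then for each (s,a) the sequence k ↦ Q^{π_k}(s,a) is nondecreasing and bounded above by (max_{(s,a)} r s a)/(1 − γ); consequently it converges to a finite limit. -/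
/-! Because `auxValue = -α · impObj`, the improvement hypothesis says
`T_{π_{k+1}} Q_k ≥ T_{π_k} Q_k = Q_k`. Each `T_π` is monotone and moves constants by the factor
`γ < 1`, so a subsolution of `T_π` lies below any supersolution; hence `Q_k ≤ Q_{k+1}`.
Gibbs' inequality makes the constant `max r / (1 - γ)` a supersolution of every `T_π`, which
bounds `Q_k`, and a bounded monotone sequence converges. -/

open scoped BigOperators

variable {S A : Type*}

theorem Real.mul_log_div_le_sub {x y : ℝ} (hx : 0 ≤ x) (hy : 0 < y) :
    x * Real.log (y / x) ≤ y - x := by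
  rcases hx.eq_or_lt with rfl | hx
  · simpa using hy.le
  · calc x * Real.log (y / x) ≤ x * (y / x - 1) :=
          mul_le_mul_of_nonneg_left (Real.log_le_sub_one_of_pos (div_pos hy hx)) hx.le
      _ = y - x := by field_simp

namespace PMF

variable {B : Type*} [Fintype B]

theorem sum_toReal_eq_one (μ : PMF B) : ∑ b, (μ b).toReal = 1 := by
  rw [← ENNReal.toReal_sum fun b _ => μ.apply_ne_top b, ← tsum_fintype (L := .unconditional B),
    μ.tsum_coe, ENNReal.toReal_one]

theorem sum_toReal_mul_add_const (μ : PMF B) (f : B → ℝ) (c : ℝ) :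
    ∑ b, (μ b).toReal * (f b + c) = ∑ b, (μ b).toReal * f b + c := by
  simp only [mul_add, Finset.sum_add_distrib, ← Finset.sum_mul, μ.sum_toReal_eq_one, one_mul]

theorem sum_toReal_mul_mono (μ : PMF B) {f g : B → ℝ} (h : f ≤ g) :
    ∑ b, (μ b).toReal * f b ≤ ∑ b, (μ b).toReal * g b := by
  gcongr with b
  exact h b

theorem sum_toReal_mul_log_div_nonpos (ν μ : PMF B) (hν : ∀ b, 0 < (ν b).toReal) :
    ∑ b, (μ b).toReal * Real.log ((ν b).toReal / (μ b).toReal) ≤ 0 :=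
  calc _ ≤ ∑ b, ((ν b).toReal - (μ b).toReal) :=
        Finset.sum_le_sum fun b _ => Real.mul_log_div_le_sub ENNReal.toReal_nonneg (hν b)
    _ = 0 := by rw [Finset.sum_sub_distrib, ν.sum_toReal_eq_one, μ.sum_toReal_eq_one, sub_self]

end PMF

section AugmentedBellman

variable [Fintype A] {πTC : S → PMF A} {α : ℝ}

theorem auxValue_mono (π : S → PMF A) {Q Q' : S → A → ℝ} (h : Q ≤ Q') :
    auxValue πTC α Q π ≤ auxValue πTC α Q' π := fun s =>
  (π s).sum_toReal_mul_mono fun a => add_le_add_left (h s a) _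

theorem auxValue_add_const (π : S → PMF A) (Q : S → A → ℝ) (c : ℝ) (s : S) :
    auxValue πTC α (fun s a => Q s a + c) π s = auxValue πTC α Q π s + c := by
  rw [auxValue, auxValue, ← PMF.sum_toReal_mul_add_const]
  exact Finset.sum_congr rfl fun a _ => by ring

theorem auxValue_const_le (hα : 0 ≤ α) (hTC : FullSupport πTC) (π : S → PMF A) (C : ℝ)
    (s : S) :
    auxValue πTC α (fun _ _ => C) π s ≤ C := by
  have hgibbs := PMF.sum_toReal_mul_log_div_nonpos (πTC s) (π s) (hTC s)
  calc auxValue πTC α (fun _ _ => C) π s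
      = α * ∑ a, ((π s) a).toReal * Real.log (((πTC s) a).toReal / ((π s) a).toReal) + C := by
        simp_rw [auxValue, add_comm C, PMF.sum_toReal_mul_add_const, mul_left_comm _ α,
          ← Finset.mul_sum]
    _ ≤ C := by linarith [mul_nonpos_of_nonneg_of_nonpos hα hgibbs]

theorem auxValue_eq_neg_mul_impObj (hα : α ≠ 0) (hTC : FullSupport πTC)
    (Q : S → A → ℝ) (π : S → PMF A) (s : S) :
    auxValue πTC α Q π s = -α * impObj πTC α Q π s := by
  rw [auxValue, impObj, Finset.mul_sum]
  refine Finset.sum_congr rfl fun a _ => ?_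
  rcases eq_or_ne ((π s) a).toReal 0 with hπ | hπ
  · simp [hπ]
  · rw [Real.log_div (hTC s a).ne' hπ]
    field_simp
    ring

theorem auxValue_le_of_impObj_le (hα : 0 < α) (hTC : FullSupport πTC) {Q : S → A → ℝ}
    {π π' : S → PMF A} {s : S} (h : impObj πTC α Q π' s ≤ impObj πTC α Q π s) :
    auxValue πTC α Q π s ≤ auxValue πTC α Q π' s := by
  rw [auxValue_eq_neg_mul_impObj hα.ne' hTC, auxValue_eq_neg_mul_impObj hα.ne' hTC]
  nlinarith

variable [Fintype S] (p : S → A → PMF S) (r : S → A → ℝ) {γ : ℝ}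

theorem augBellman_eq_add_sum_auxValue (π : S → PMF A) (Q : S → A → ℝ) (s : S) (a : A) :
    augBellman p r γ α πTC π Q s a
      = r s a + γ * ∑ s', ((p s a) s').toReal * auxValue πTC α Q π s' := rfl

theorem augBellman_le_augBellman (hγ : 0 ≤ γ) {π π' : S → PMF A} {Q Q' : S → A → ℝ}
    (h : auxValue πTC α Q π ≤ auxValue πTC α Q' π') :
    augBellman p r γ α πTC π Q ≤ augBellman p r γ α πTC π' Q' := fun s a => by
  rw [augBellman_eq_add_sum_auxValue, augBellman_eq_add_sum_auxValue]
  gcongr r s a + γ * ?_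
  exact (p s a).sum_toReal_mul_mono h

theorem augBellman_add_const (π : S → PMF A) (Q : S → A → ℝ) (c : ℝ) (s : S) (a : A) :
    augBellman p r γ α πTC π (fun s a => Q s a + c) s a
      = augBellman p r γ α πTC π Q s a + γ * c := by
  simp only [augBellman_eq_add_sum_auxValue, auxValue_add_const, PMF.sum_toReal_mul_add_const]
  ring

theorem augBellman_const_le (hγ : 0 ≤ γ) (hα : 0 ≤ α) (hTC : FullSupport πTC)
    (π : S → PMF A) {C : ℝ} (hr : ∀ s a, r s a ≤ (1 - γ) * C) :
    augBellman p r γ α πTC π (fun _ _ => C) ≤ fun _ _ => C := fun s a => by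
  have hV : ∑ s', ((p s a) s').toReal * auxValue πTC α (fun _ _ => C) π s' ≤ C := by
    refine ((p s a).sum_toReal_mul_mono (g := fun _ => C)
      (auxValue_const_le hα hTC π C)).trans_eq ?_
    rw [← Finset.sum_mul, (p s a).sum_toReal_eq_one, one_mul]
  rw [augBellman_eq_add_sum_auxValue]
  nlinarith [hr s a]

/-- At a point where `Q - P` attains its maximum `c`, one gets `c ≤ γ c`, hence `c ≤ 0`. -/
theorem le_of_le_augBellman_of_augBellman_le (hγ0 : 0 ≤ γ) (hγ1 : γ < 1) (π : S → PMF A)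
    {Q P : S → A → ℝ} (hQ : Q ≤ augBellman p r γ α πTC π Q)
    (hP : augBellman p r γ α πTC π P ≤ P) : Q ≤ P := fun s a => by
  have : Nonempty (S × A) := ⟨(s, a)⟩
  obtain ⟨m, hm⟩ := Finite.exists_max fun x : S × A => Q x.1 x.2 - P x.1 x.2
  set c := Q m.1 m.2 - P m.1 m.2
  have hle : Q ≤ fun s a => P s a + c := fun s a => by linarith [hm (s, a)]
  have hQP : ∀ s a, Q s a ≤ P s a + γ * c := fun s a =>
    calc Q s a ≤ augBellman p r γ α πTC π Q s a := hQ s a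
      _ ≤ augBellman p r γ α πTC π (fun s a => P s a + c) s a :=
        augBellman_le_augBellman p r hγ0 (auxValue_mono π hle) s a
      _ = augBellman p r γ α πTC π P s a + γ * c := augBellman_add_const p r π P c s a
      _ ≤ P s a + γ * c := by linarith [hP s a]
  have hc : c ≤ 0 := by nlinarith [hQP m.1 m.2]
  linarith [hm (s, a)]

end AugmentedBellman

theorem policy_iteration_values_converge_general [Fintype S] [Fintype A]
    (p : S → A → PMF S) (r : S → A → ℝ) (γ α : ℝ)
    (hγ0 : 0 ≤ γ) (hγ1 : γ < 1) (hα : 0 < α)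
    (πTC : S → PMF A) (hTC : FullSupport πTC)
    (πseq : ℕ → S → PMF A)
    (Qseq : ℕ → S → A → ℝ)
    (hfix : ∀ k, augBellman p r γ α πTC (πseq k) (Qseq k) = Qseq k)
    (hJ : ∀ k s,
      impObj πTC α (Qseq k) (πseq (k + 1)) s ≤ impObj πTC α (Qseq k) (πseq k) s) :
    ∀ s a, Monotone (fun k => Qseq k s a) ∧
      (∀ k, Qseq k s a ≤ (⨆ sa : S × A, r sa.1 sa.2) / (1 - γ)) ∧
      ∃ L : ℝ, Filter.Tendsto (fun k => Qseq k s a) Filter.atTop (nhds L) := by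
  set C := (⨆ sa : S × A, r sa.1 sa.2) / (1 - γ)
  have hr : ∀ s a, r s a ≤ (1 - γ) * C := fun s a => by
    rw [mul_div_cancel₀ _ (sub_pos.2 hγ1).ne']
    exact le_ciSup (f := fun sa : S × A => r sa.1 sa.2) (Set.finite_range _).bddAbove (s, a)
  have hbound : ∀ k, Qseq k ≤ fun _ _ => C := fun k =>
    le_of_le_augBellman_of_augBellman_le p r hγ0 hγ1 (πseq k) (hfix k).ge
      (augBellman_const_le p r hγ0 hα.le hTC (πseq k) hr)
  have hstep : ∀ k, Qseq k ≤ Qseq (k + 1) := fun k => by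
    have himprove : Qseq k ≤ augBellman p r γ α πTC (πseq (k + 1)) (Qseq k) :=
      calc Qseq k = augBellman p r γ α πTC (πseq k) (Qseq k) := (hfix k).symm
        _ ≤ augBellman p r γ α πTC (πseq (k + 1)) (Qseq k) :=
          augBellman_le_augBellman p r hγ0 fun s => auxValue_le_of_impObj_le hα hTC (hJ k s)
    exact le_of_le_augBellman_of_augBellman_le p r hγ0 hγ1 _ himprove (hfix (k + 1)).le
  intro s a
  have hmono : Monotone fun k => Qseq k s a := monotone_nat_of_le_succ fun k => hstep k s a
  exact ⟨hmono, fun k => hbound k s a,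
    _, tendsto_atTop_ciSup hmono ⟨C, Set.forall_mem_range.2 fun k => hbound k s a⟩⟩

theorem policy_iteration_values_converge [Fintype S] [Fintype A] [Nonempty S] [Nonempty A]
    (p : S → A → PMF S) (r : S → A → ℝ) (γ α : ℝ)
    (hγ0 : 0 ≤ γ) (hγ1 : γ < 1) (hα : 0 < α)
    (πTC : S → PMF A) (hTC : FullSupport πTC)
    (πseq : ℕ → S → PMF A) (hπ : ∀ k, FullSupport (πseq k))
    (Qseq : ℕ → S → A → ℝ)
    (hfix : ∀ k, augBellman p r γ α πTC (πseq k) (Qseq k) = Qseq k)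
    (hJ : ∀ k s,
      impObj πTC α (Qseq k) (πseq (k + 1)) s ≤ impObj πTC α (Qseq k) (πseq k) s) :
    ∀ s a, Monotone (fun k => Qseq k s a) ∧
      (∀ k, Qseq k s a ≤ (⨆ sa : S × A, r sa.1 sa.2) / (1 - γ)) ∧
      ∃ L : ℝ, Filter.Tendsto (fun k => Qseq k s a) Filter.atTop (nhds L) :=
  policy_iteration_values_converge_general p r γ α hγ0 hγ1 hα πTC hTC πseq Qseq hfix hJ
end
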